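/- arXiv:1912.06504 — 2 statements merged into one kernel-verified Lean document; each statement's English description precedes it below -/
import Mathlib

section
/- Similarly, for all w ∈ ℂ with Im(w) < 0 and all η ∈ ℂ with w+η ∉ ℤ, one has Λ(w,η)·Λ(-w,1-η) = (1 - e^{-2πi(w+η)})^{-1}, where Λ(w,η) = e^w · Γ(w+η) / (√(2π) · exp((w+η-1/2)·Log w)) and Log is the principal logarithm. -/
open Complex

/-- The normalized Gamma-type function `Λ(w,η)` of Barbieri's solution to the
Riemann–Hilbert problem, defined using the principal branch of the logarithm. -/
noncomputable def Lam (w η : ℂ) : ℂ :=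
  Complex.exp w * Complex.Gamma (w + η) /
    ((Real.sqrt (2 * Real.pi) : ℂ) * Complex.exp ((w + η - 1 / 2) * Complex.log w))

open scoped Real

/-! Euler's reflection formula `Γ(z) Γ(1 - z) = π / sin (π z)` takes care of the Gamma factors,
and `e^w e^{-w} = 1`. For `Im w < 0` we have `Log (-w) = Log w + π i`, so the two powers of `w`
combine to `exp (-(z - 1/2) π i) = i e^{-π i z}`, and `2 i e^{-π i z} sin (π z) = 1 - e^{-2π i z}`. -/

theorem Complex.log_neg_of_im_neg {w : ℂ} (hw : w.im < 0) : log (-w) = log w + π * I := by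
  rw [log, log, norm_neg, arg_neg_eq_arg_add_pi_of_im_neg hw, ofReal_add]
  ring

theorem Complex.one_sub_exp_neg_two_pi_mul_I_mul (z : ℂ) :
    1 - exp (-(2 * π * I * z)) = 2 * I * exp (-(π * I * z)) * sin (π * z) := by
  have hsq : exp (-(π * I * z)) * exp (-(π * I * z)) = exp (-(2 * π * I * z)) := by
    rw [← exp_add]; congr 1; ring
  have hinv : exp (-(π * I * z)) * exp (π * z * I) = 1 := by
    rw [← exp_add, show -(π * I * z) + π * z * I = 0 by ring, exp_zero]
  rw [sin, show -(π * z) * I = -(π * I * z) by ring]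
  linear_combination (exp (-(π * I * z)) * exp (π * z * I)
    - exp (-(π * I * z)) * exp (-(π * I * z))) * I_mul_I + hsq - hinv

theorem Lam_mul_Lam_neg_one_sub (w η : ℂ) :
    Lam w η * Lam (-w) (1 - η) = Gamma (w + η) * Gamma (1 - (w + η)) /
      (2 * π * exp ((w + η - 1 / 2) * (log w - log (-w)))) := by
  have hsqrt : (√(2 * π) : ℂ) * √(2 * π) = 2 * π := by
    rw [← ofReal_mul, Real.mul_self_sqrt (by positivity)]; push_cast; ring
  have hcancel : exp w * exp (-w) = 1 := by rw [← exp_add, add_neg_cancel, exp_zero]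
  rw [Lam, Lam, div_mul_div_comm, mul_mul_mul_comm, hcancel, one_mul, mul_mul_mul_comm, hsqrt,
    ← exp_add]
  congr 3 <;> ring

theorem Lam_reflection_lower_general (w η : ℂ) (hw : w.im < 0) :
    Lam w η * Lam (-w) (1 - η) =
      (1 - Complex.exp (-(2 * (Real.pi : ℂ) * Complex.I * (w + η))))⁻¹ := by
  have hexp : exp ((w + η - 1 / 2) * (log w - log (-w))) = I * exp (-(π * I * (w + η))) := by
    rw [log_neg_of_im_neg hw, show (w + η - 1 / 2) * (log w - (log w + π * I)) =
      π / 2 * I + -(π * I * (w + η)) by ring, exp_add, exp_pi_div_two_mul_I]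
  have hπ : (π : ℂ) ≠ 0 := ofReal_ne_zero.mpr Real.pi_ne_zero
  rw [Lam_mul_Lam_neg_one_sub, Gamma_mul_Gamma_one_sub, hexp, one_sub_exp_neg_two_pi_mul_I_mul]
  field_simp

theorem Lam_reflection_lower (w η : ℂ) (hw : w.im < 0) (hn : ∀ n : ℤ, w + η ≠ (n : ℂ)) :
    Lam w η * Lam (-w) (1 - η) =
      (1 - Complex.exp (-(2 * (Real.pi : ℂ) * Complex.I * (w + η))))⁻¹ :=
  Lam_reflection_lower_general w η hw
end

section
/- Let U ⊆ ℂⁿ open, V ⊆ ℂⁿ a neighbourhood of 0, J : U × V → ℂ holomorphic, odd in the second variable (J(z,-θ) = -J(z,θ)), and satisfying the Joyce PDE ∂²J/∂θ_i∂z_j - ∂²J/∂θ_j∂z_i = ∑_{p,q} η_{pq}(∂²J/∂θ_i∂θ_p)(∂²J/∂θ_j∂θ_q) for a constant antisymmetric matrix η. Define the Christoffel symbols Γ^m_{ij}(z) = -∑_l η_{lm}·∂³J/∂θ_i∂θ_j∂θ_l (z, 0). Then the associated connection is flat: for all i, j, k, m, ∂Γ^m_{jk}/∂z_i - ∂Γ^m_{ik}/∂z_j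 + ∑_q (Γ^m_{iq}Γ^q_{jk} - Γ^m_{jq}Γ^q_{ik}) = 0. Moreover it is torsion-free: Γ^m_{ij} = Γ^m_{ji}. -/
/-!
Write `W_{abc}(z)` for the third `θ`-derivatives of `J` at `(z, 0)`; it is a symmetric tensor, which
is torsion-freeness. As `J` is odd in `θ`, its second `θ`-derivatives vanish at `θ = 0`, so
differentiating the Joyce PDE twice in `θ` and restricting to `θ = 0` keeps only the terms where
each factor of the quadratic right-hand side is differentiated once:
`∂_{z_j} W_{ikl} - ∂_{z_i} W_{jkl} = ∑ η_{pq} (W_{ipk} W_{jql} + W_{ipl} W_{jqk})`.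
Contracted with `η`, these are the derivative terms of the curvature, and the antisymmetry of `η`
makes them cancel its quadratic terms.
-/

/-- Partial derivative of a function of `n` complex variables in the `i`-th coordinate. -/
noncomputable def pd {n : ℕ} (i : Fin n) (g : (Fin n → ℂ) → ℂ) : (Fin n → ℂ) → ℂ :=
  fun x => deriv (fun t => g (Function.update x i t)) (x i)

open Set Filter Function
open scoped Topology ContDiff

section DirDeriv

variable {𝕜 E : Type*} [NontriviallyNormedField 𝕜] [NormedAddCommGroup E] [NormedSpace 𝕜 E]
  {f g : E → 𝕜} {s : Set E} {x : E}

noncomputable def dirDeriv (v : E) (f : E → 𝕜) (x : E) : 𝕜 := fderiv 𝕜 f x v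

theorem Set.EqOn.dirDeriv_eq (h : EqOn f g s) (hs : IsOpen s) (hx : x ∈ s) (v : E) :
    dirDeriv v f x = dirDeriv v g x := by
  rw [dirDeriv, dirDeriv, (h.eventuallyEq_of_mem (hs.mem_nhds hx)).fderiv_eq]

theorem ContDiffOn.differentiableAt_of_isOpen (hf : ContDiffOn 𝕜 ω f s) (hs : IsOpen s)
    (hx : x ∈ s) : DifferentiableAt 𝕜 f x :=
  (hf.contDiffAt (hs.mem_nhds hx)).differentiableAt (by simp)

theorem ContDiffOn.dirDeriv (hf : ContDiffOn 𝕜 ω f s) (hs : IsOpen s) (v : E) :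
    ContDiffOn 𝕜 ω (dirDeriv v f) s :=
  (hf.fderiv_of_isOpen hs le_rfl).clm_apply contDiffOn_const

theorem dirDeriv_comm (hf : ContDiffAt 𝕜 ω f x) (v w : E) :
    dirDeriv v (dirDeriv w f) x = dirDeriv w (dirDeriv v f) x := by
  have h := VectorField.fderiv_apply_lieBracket_of_isSymmSndFDerivAt (V := fun _ => v)
    (W := fun _ => w) (hf.of_le le_top) hf.isSymmSndFDerivAt_of_omega
    (differentiableAt_const _) (differentiableAt_const _)
  simp only [VectorField.lieBracket, fderiv_fun_const, Pi.zero_apply, zero_apply, sub_self,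
    map_zero] at h
  exact sub_eq_zero.1 h.symm

theorem dirDeriv_fun_add (hf : DifferentiableAt 𝕜 f x) (hg : DifferentiableAt 𝕜 g x) (v : E) :
    dirDeriv v (fun y => f y + g y) x = dirDeriv v f x + dirDeriv v g x := by
  simp [dirDeriv, fderiv_fun_add hf hg]

theorem dirDeriv_fun_sub (hf : DifferentiableAt 𝕜 f x) (hg : DifferentiableAt 𝕜 g x) (v : E) :
    dirDeriv v (fun y => f y - g y) x = dirDeriv v f x - dirDeriv v g x := by
  simp [dirDeriv, fderiv_fun_sub hf hg]

theorem dirDeriv_fun_mul (hf : DifferentiableAt 𝕜 f x) (hg : DifferentiableAt 𝕜 g x) (v : E) :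
    dirDeriv v (fun y => f y * g y) x = f x * dirDeriv v g x + g x * dirDeriv v f x := by
  simp [dirDeriv, fderiv_fun_mul hf hg]

theorem dirDeriv_const_mul (hf : DifferentiableAt 𝕜 f x) (c : 𝕜) (v : E) :
    dirDeriv v (fun y => c * f y) x = c * dirDeriv v f x := by
  simp [dirDeriv, fderiv_const_mul hf c]

theorem dirDeriv_fun_neg (f : E → 𝕜) (v : E) :
    dirDeriv v (fun y => -f y) x = -dirDeriv v f x := by
  simp [dirDeriv, fderiv_fun_neg]

theorem dirDeriv_fun_sum {ι : Type*} {u : Finset ι} {f : ι → E → 𝕜}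
    (hf : ∀ p ∈ u, DifferentiableAt 𝕜 (f p) x) (v : E) :
    dirDeriv v (fun y => ∑ p ∈ u, f p y) x = ∑ p ∈ u, dirDeriv v (f p) x := by
  simp [dirDeriv, fderiv_fun_sum hf]

theorem dirDeriv_map_eq_neg_mul {N : E →L[𝕜] E} {c : 𝕜} {v : E} (hs : IsOpen s)
    (hf : DifferentiableOn 𝕜 f s) (hNs : MapsTo N s s) (h : ∀ y ∈ s, f (N y) = c * f y)
    (hv : N v = -v) : ∀ y ∈ s, dirDeriv v f (N y) = -c * dirDeriv v f y := by
  intro y hy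
  have hfy : DifferentiableAt 𝕜 f y := hf.differentiableAt (hs.mem_nhds hy)
  have hfNy : DifferentiableAt 𝕜 f (N y) := hf.differentiableAt (hs.mem_nhds (hNs hy))
  have hchain : fderiv 𝕜 (fun y => f (N y)) y = (fderiv 𝕜 f (N y)).comp N := by
    rw [fderiv_fun_comp y hfNy N.differentiableAt, N.fderiv]
  have hscale : fderiv 𝕜 (fun y => f (N y)) y = c • fderiv 𝕜 f y := by
    rw [(EqOn.eventuallyEq_of_mem h (hs.mem_nhds hy)).fderiv_eq, fderiv_const_mul hfy]
  have happly := congrArg (fun L : E →L[𝕜] 𝕜 => L v) (hchain.symm.trans hscale)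
  simp only [ContinuousLinearMap.comp_apply, hv, map_neg, smul_apply, smul_eq_mul] at happly
  simp only [dirDeriv]
  linear_combination -happly

theorem dirDeriv_dirDeriv_eq_zero_of_odd [CharZero 𝕜] {N : E →L[𝕜] E} {v w : E}
    (hs : IsOpen s) (hf : ContDiffOn 𝕜 ω f s) (hNs : MapsTo N s s)
    (hodd : ∀ y ∈ s, f (N y) = -f y) (hx : x ∈ s) (hNx : N x = x) (hv : N v = -v)
    (hw : N w = -w) : dirDeriv w (dirDeriv v f) x = 0 := by
  have hdf := dirDeriv_map_eq_neg_mul hs (hf.differentiableOn (by simp)) hNs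
    (c := -1) (fun y hy => by rw [hodd y hy]; ring) hv
  have hddf := dirDeriv_map_eq_neg_mul hs ((hf.dirDeriv hs v).differentiableOn (by simp)) hNs
    hdf hw x hx
  rw [hNx] at hddf
  linear_combination hddf / 2

theorem dirDeriv_dirDeriv_fun_sub (hs : IsOpen s) (hf : ContDiffOn 𝕜 ω f s)
    (hg : ContDiffOn 𝕜 ω g s) (hx : x ∈ s) (v w : E) :
    dirDeriv w (dirDeriv v fun y => f y - g y) x =
      dirDeriv w (dirDeriv v f) x - dirDeriv w (dirDeriv v g) x := by
  have h : EqOn (dirDeriv v fun y => f y - g y) (fun y => dirDeriv v f y - dirDeriv v g y) s :=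
    fun y hy => dirDeriv_fun_sub (hf.differentiableAt_of_isOpen hs hy)
      (hg.differentiableAt_of_isOpen hs hy) v
  rw [h.dirDeriv_eq hs hx, dirDeriv_fun_sub ((hf.dirDeriv hs v).differentiableAt_of_isOpen hs hx)
    ((hg.dirDeriv hs v).differentiableAt_of_isOpen hs hx)]

theorem dirDeriv_dirDeriv_fun_sum {ι : Type*} {u : Finset ι} {f : ι → E → 𝕜} (hs : IsOpen s)
    (hf : ∀ p ∈ u, ContDiffOn 𝕜 ω (f p) s) (hx : x ∈ s) (v w : E) :
    dirDeriv w (dirDeriv v fun y => ∑ p ∈ u, f p y) x =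
      ∑ p ∈ u, dirDeriv w (dirDeriv v (f p)) x := by
  have h : EqOn (dirDeriv v fun y => ∑ p ∈ u, f p y) (fun y => ∑ p ∈ u, dirDeriv v (f p) y) s :=
    fun y hy => dirDeriv_fun_sum (fun p hp => (hf p hp).differentiableAt_of_isOpen hs hy) v
  rw [h.dirDeriv_eq hs hx,
    dirDeriv_fun_sum (fun p hp => ((hf p hp).dirDeriv hs v).differentiableAt_of_isOpen hs hx)]

theorem dirDeriv_dirDeriv_fun_mul_of_eq_zero (hs : IsOpen s) (hf : ContDiffOn 𝕜 ω f s)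
    (hg : ContDiffOn 𝕜 ω g s) (hx : x ∈ s) (hf0 : f x = 0) (hg0 : g x = 0) (v w : E) :
    dirDeriv w (dirDeriv v fun y => f y * g y) x =
      dirDeriv v f x * dirDeriv w g x + dirDeriv w f x * dirDeriv v g x := by
  have hf' := fun y (hy : y ∈ s) => hf.differentiableAt_of_isOpen hs hy
  have hg' := fun y (hy : y ∈ s) => hg.differentiableAt_of_isOpen hs hy
  have h : EqOn (dirDeriv v fun y => f y * g y)
      (fun y => f y * dirDeriv v g y + g y * dirDeriv v f y) s :=
    fun y hy => dirDeriv_fun_mul (hf' y hy) (hg' y hy) v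
  have hdf := (hf.dirDeriv hs v).differentiableAt_of_isOpen hs hx
  have hdg := (hg.dirDeriv hs v).differentiableAt_of_isOpen hs hx
  rw [h.dirDeriv_eq hs hx, dirDeriv_fun_add ((hf' x hx).fun_mul hdg) ((hg' x hx).fun_mul hdf),
    dirDeriv_fun_mul (hf' x hx) hdg, dirDeriv_fun_mul (hg' x hx) hdf, hf0, hg0]
  ring

theorem dirDeriv_dirDeriv_dirDeriv_comm (hs : IsOpen s) (hf : ContDiffOn 𝕜 ω f s) (hx : x ∈ s)
    (u v w : E) :
    dirDeriv w (dirDeriv v (dirDeriv u f)) x = dirDeriv u (dirDeriv w (dirDeriv v f)) x := by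
  have h : EqOn (dirDeriv v (dirDeriv u f)) (dirDeriv u (dirDeriv v f)) s :=
    fun y hy => dirDeriv_comm (hf.contDiffAt (hs.mem_nhds hy)) v u
  rw [h.dirDeriv_eq hs hx, dirDeriv_comm ((hf.dirDeriv hs v).contDiffAt (hs.mem_nhds hx))]

theorem dirDeriv_dirDeriv_of_joyce_pde {ι : Type*} [Fintype ι] (η : ι → ι → 𝕜) (e d : ι → E)
    {G : E → 𝕜} (hs : IsOpen s) (hG : ContDiffOn 𝕜 ω G s) (hx : x ∈ s)
    (hpde : ∀ i j, EqOn
      (fun y => dirDeriv (d j) (dirDeriv (e i) G) y - dirDeriv (d i) (dirDeriv (e j) G) y)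
      (fun y => ∑ p, ∑ q, η p q * dirDeriv (e p) (dirDeriv (e i) G) y *
        dirDeriv (e q) (dirDeriv (e j) G) y) s)
    (hvan : ∀ i p, dirDeriv (e p) (dirDeriv (e i) G) x = 0) (i j k l : ι) :
    dirDeriv (d j) (dirDeriv (e l) (dirDeriv (e k) (dirDeriv (e i) G))) x -
        dirDeriv (d i) (dirDeriv (e l) (dirDeriv (e k) (dirDeriv (e j) G))) x =
      ∑ p, ∑ q, η p q *
        (dirDeriv (e k) (dirDeriv (e p) (dirDeriv (e i) G)) x *
            dirDeriv (e l) (dirDeriv (e q) (dirDeriv (e j) G)) x +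
          dirDeriv (e l) (dirDeriv (e p) (dirDeriv (e i) G)) x *
            dirDeriv (e k) (dirDeriv (e q) (dirDeriv (e j) G)) x) := by
  have hG1 : ∀ i, ContDiffOn 𝕜 ω (dirDeriv (e i) G) s := fun i => hG.dirDeriv hs _
  have hG2 : ∀ i p, ContDiffOn 𝕜 ω (dirDeriv (e p) (dirDeriv (e i) G)) s :=
    fun i p => (hG1 i).dirDeriv hs _
  have key := Set.EqOn.dirDeriv_eq (fun y hy => (hpde i j).dirDeriv_eq hs hy (e k)) hs hx (e l)
  rw [dirDeriv_dirDeriv_fun_sub hs ((hG1 i).dirDeriv hs _) ((hG1 j).dirDeriv hs _) hx,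
    dirDeriv_dirDeriv_dirDeriv_comm hs (hG1 i) hx, dirDeriv_dirDeriv_dirDeriv_comm hs (hG1 j) hx,
    dirDeriv_dirDeriv_fun_sum hs (fun p _ => ContDiffOn.sum fun q _ =>
      (contDiffOn_const.mul (hG2 i p)).mul (hG2 j q)) hx] at key
  rw [key]
  refine Finset.sum_congr rfl fun p _ => ?_
  rw [dirDeriv_dirDeriv_fun_sum hs (fun q _ => (contDiffOn_const.mul (hG2 i p)).mul (hG2 j q)) hx]
  refine Finset.sum_congr rfl fun q _ => ?_
  rw [dirDeriv_dirDeriv_fun_mul_of_eq_zero hs (contDiffOn_const.mul (hG2 i p)) (hG2 j q) hx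
    (by simp [hvan]) (hvan j q),
    dirDeriv_const_mul ((hG2 i p).differentiableAt_of_isOpen hs hx),
    dirDeriv_const_mul ((hG2 i p).differentiableAt_of_isOpen hs hx)]
  ring

end DirDeriv

section Coordinates

variable {n : ℕ}

-- `θDir i` and `zDir i` are `∂/∂θ_i` and `∂/∂z_i` on the space of pairs `(z, θ)`.
def θDir (i : Fin n) : (Fin n → ℂ) × (Fin n → ℂ) := (0, Pi.single i 1)

def zDir (i : Fin n) : (Fin n → ℂ) × (Fin n → ℂ) := (Pi.single i 1, 0)

theorem Set.EqOn.pd_eq {f g : (Fin n → ℂ) → ℂ} {s : Set (Fin n → ℂ)} {x : Fin n → ℂ}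
    (h : EqOn f g s) (hs : IsOpen s) (hx : x ∈ s) (i : Fin n) : pd i f x = pd i g x := by
  refine EventuallyEq.deriv_eq ?_
  have hupd : Tendsto (update x i) (𝓝 (x i)) (𝓝 x) := by
    simpa using (hasDerivAt_update x i (x i)).continuousAt.tendsto
  exact hupd.eventually (h.eventuallyEq_of_mem (hs.mem_nhds hx))

theorem pd_comp {F : Type*} [NormedAddCommGroup F] [NormedSpace ℂ F] {G : F → ℂ}
    {φ : (Fin n → ℂ) → F} {φ' : (Fin n → ℂ) →L[ℂ] F} {x : Fin n → ℂ}
    (hG : DifferentiableAt ℂ G (φ x)) (hφ : HasFDerivAt φ φ' x) (i : Fin n) :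
    pd i (fun y => G (φ y)) x = dirDeriv (φ' (Pi.single i 1)) G (φ x) :=
  ((hG.hasFDerivAt.comp x hφ).comp_hasDerivAt_of_eq (x i) (hasDerivAt_update x i (x i))
    (update_eq_self i x).symm).deriv

variable {U V : Set (Fin n → ℂ)}

theorem eqOn_pd_slice_snd {f : (Fin n → ℂ) → ℂ} {H : (Fin n → ℂ) × (Fin n → ℂ) → ℂ}
    {z : Fin n → ℂ} (hV : IsOpen V) (hH : ∀ θ ∈ V, DifferentiableAt ℂ H (z, θ))
    (hf : EqOn f (fun θ => H (z, θ)) V) (i : Fin n) :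
    EqOn (pd i f) (fun θ => dirDeriv (θDir i) H (z, θ)) V := fun θ hθ =>
  (hf.pd_eq hV hθ i).trans (pd_comp (hH θ hθ) (hasFDerivAt_prodMk_right z θ) i)

theorem eqOn_pd_slice_fst {f : (Fin n → ℂ) → ℂ} {H : (Fin n → ℂ) × (Fin n → ℂ) → ℂ}
    {θ : Fin n → ℂ} (hU : IsOpen U) (hH : ∀ z ∈ U, DifferentiableAt ℂ H (z, θ))
    (hf : EqOn f (fun z => H (z, θ)) U) (i : Fin n) :
    EqOn (pd i f) (fun z => dirDeriv (zDir i) H (z, θ)) U := fun z hz =>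
  (hf.pd_eq hU hz i).trans
    (pd_comp (φ := fun z => (z, θ)) (hH z hz) (hasFDerivAt_prodMk_left z θ) i)

end Coordinates

theorem joyce_curvature_identity {ι R : Type*} [Fintype ι] [CommRing R] (η : ι → ι → R)
    (hη : ∀ i j, η i j = -η j i) (W : ι → ι → ι → R) (hW : ∀ a b c, W a b c = W a c b)
    (i j k m : ι) :
    ∑ l, η l m * ∑ p, ∑ q, η p q * (W i p k * W j q l + W i p l * W j q k) +
      ∑ q, ((∑ l, η l m * W i q l) * (∑ p, η p q * W j k p) -
        (∑ l, η l m * W j q l) * (∑ p, η p q * W i k p)) = 0 := by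
  have first : ∑ q, (∑ l, η l m * W i q l) * (∑ p, η p q * W j k p) =
      -∑ l, ∑ p, ∑ q, η l m * (η p q * (W i p l * W j q k)) := by
    simp_rw [Finset.sum_mul_sum, ← Finset.sum_neg_distrib]
    rw [Finset.sum_comm]
    refine Finset.sum_congr rfl fun l _ => Finset.sum_congr rfl fun a _ =>
      Finset.sum_congr rfl fun b _ => ?_
    rw [hη b a, hW j k b]
    ring
  have second : ∑ q, (∑ l, η l m * W j q l) * (∑ p, η p q * W i k p) =
      ∑ l, ∑ p, ∑ q, η l m * (η p q * (W i p k * W j q l)) := by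
    simp_rw [Finset.sum_mul_sum]
    rw [Finset.sum_comm]
    refine Finset.sum_congr rfl fun l _ => ?_
    rw [Finset.sum_comm]
    refine Finset.sum_congr rfl fun a _ => Finset.sum_congr rfl fun b _ => ?_
    rw [hW i k a]
    ring
  simp_rw [Finset.sum_sub_distrib, first, second, Finset.mul_sum, mul_add,
    Finset.sum_add_distrib]
  ring

section Joyce

variable {n : ℕ} {U V : Set (Fin n → ℂ)} {J : (Fin n → ℂ) → (Fin n → ℂ) → ℂ}

theorem dirDeriv_θDir_θDir_eq_zero_of_odd (hU : IsOpen U) (hV : IsOpen V)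
    (hJ : ContDiffOn ℂ ω (uncurry J) (U ×ˢ V)) (hodd : ∀ z θ, J z (-θ) = -J z θ)
    {z : Fin n → ℂ} (hz : z ∈ U) (h0V : (0 : Fin n → ℂ) ∈ V) (i p : Fin n) :
    dirDeriv (θDir p) (dirDeriv (θDir i) (uncurry J)) (z, 0) = 0 := by
  let N : ((Fin n → ℂ) × (Fin n → ℂ)) →L[ℂ] (Fin n → ℂ) × (Fin n → ℂ) :=
    (ContinuousLinearMap.id ℂ _).prodMap (-ContinuousLinearMap.id ℂ _)
  have hN : ∀ y, N y = (y.1, -y.2) := fun _ => rfl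
  have hNθ : ∀ i, N (θDir i) = -θDir i := by simp [hN, θDir]
  refine dirDeriv_dirDeriv_eq_zero_of_odd (s := U ×ˢ (V ∩ Neg.neg ⁻¹' V)) (N := N)
    (hU.prod (hV.inter (hV.preimage continuous_neg)))
    (hJ.mono (prod_mono_right inter_subset_left)) ?_ (fun y _ => hodd y.1 y.2)
    ⟨hz, h0V, by simpa using h0V⟩ (by simp [hN]) (hNθ i) (hNθ p)
  rintro ⟨z, θ⟩ ⟨hz, hθ, hθ'⟩
  exact ⟨hz, hθ', by simpa [hN] using hθ⟩

theorem eqOn_pd_snd_uncurry (hU : IsOpen U) (hV : IsOpen V)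
    (hJ : ContDiffOn ℂ ω (uncurry J) (U ×ˢ V)) {z : Fin n → ℂ} (hz : z ∈ U) (i : Fin n) :
    EqOn (pd i (J z)) (fun θ => dirDeriv (θDir i) (uncurry J) (z, θ)) V :=
  eqOn_pd_slice_snd hV (fun _ hθ => hJ.differentiableAt_of_isOpen (hU.prod hV) ⟨hz, hθ⟩)
    (fun _ _ => rfl) i

theorem eqOn_pd_pd_snd_uncurry (hU : IsOpen U) (hV : IsOpen V)
    (hJ : ContDiffOn ℂ ω (uncurry J) (U ×ˢ V)) {z : Fin n → ℂ} (hz : z ∈ U) (i p : Fin n) :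
    EqOn (pd p (pd i (J z))) (fun θ => dirDeriv (θDir p) (dirDeriv (θDir i) (uncurry J)) (z, θ))
      V :=
  eqOn_pd_slice_snd hV
    (fun _ hθ => (hJ.dirDeriv (hU.prod hV) _).differentiableAt_of_isOpen (hU.prod hV) ⟨hz, hθ⟩)
    (eqOn_pd_snd_uncurry hU hV hJ hz i) p

theorem eqOn_pd_pd_pd_snd_uncurry (hU : IsOpen U) (hV : IsOpen V)
    (hJ : ContDiffOn ℂ ω (uncurry J) (U ×ˢ V)) {z : Fin n → ℂ} (hz : z ∈ U) (i j l : Fin n) :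
    EqOn (pd l (pd j (pd i (J z))))
      (fun θ => dirDeriv (θDir l) (dirDeriv (θDir j) (dirDeriv (θDir i) (uncurry J))) (z, θ)) V :=
  eqOn_pd_slice_snd hV
    (fun _ hθ => ((hJ.dirDeriv (hU.prod hV) _).dirDeriv (hU.prod hV) _).differentiableAt_of_isOpen
      (hU.prod hV) ⟨hz, hθ⟩)
    (eqOn_pd_pd_snd_uncurry hU hV hJ hz i j) l

theorem eqOn_pd_fst_pd_snd_uncurry (hU : IsOpen U) (hV : IsOpen V)
    (hJ : ContDiffOn ℂ ω (uncurry J) (U ×ˢ V)) {θ : Fin n → ℂ} (hθ : θ ∈ V) (i j : Fin n) :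
    EqOn (pd j fun z => pd i (J z) θ)
      (fun z => dirDeriv (zDir j) (dirDeriv (θDir i) (uncurry J)) (z, θ)) U :=
  eqOn_pd_slice_fst hU
    (fun _ hz => (hJ.dirDeriv (hU.prod hV) _).differentiableAt_of_isOpen (hU.prod hV) ⟨hz, hθ⟩)
    (fun _ hz => eqOn_pd_snd_uncurry hU hV hJ hz i hθ) j

theorem joyce_pde_eqOn_dirDeriv (η : Fin n → Fin n → ℂ) (hU : IsOpen U) (hV : IsOpen V)
    (hJ : ContDiffOn ℂ ω (uncurry J) (U ×ˢ V))
    (hPDE : ∀ z ∈ U, ∀ θ ∈ V, ∀ i j,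
      pd j (fun z' => pd i (J z') θ) z - pd i (fun z' => pd j (J z') θ) z =
        ∑ p, ∑ q, η p q * pd p (pd i (J z)) θ * pd q (pd j (J z)) θ) (i j : Fin n) :
    EqOn (fun y => dirDeriv (zDir j) (dirDeriv (θDir i) (uncurry J)) y -
        dirDeriv (zDir i) (dirDeriv (θDir j) (uncurry J)) y)
      (fun y => ∑ p, ∑ q, η p q * dirDeriv (θDir p) (dirDeriv (θDir i) (uncurry J)) y *
        dirDeriv (θDir q) (dirDeriv (θDir j) (uncurry J)) y) (U ×ˢ V) := by
  rintro ⟨z, θ⟩ ⟨hz, hθ⟩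
  have h := hPDE z hz θ hθ i j
  simp only [eqOn_pd_fst_pd_snd_uncurry hU hV hJ hθ _ _ hz,
    eqOn_pd_pd_snd_uncurry hU hV hJ hz _ _ hθ] at h
  exact h

theorem pd_eq_neg_sum_mul_dirDeriv {c : Fin n → ℂ} {K : Fin n → (Fin n → ℂ) × (Fin n → ℂ) → ℂ}
    {f : (Fin n → ℂ) → ℂ} {z θ : Fin n → ℂ} (hU : IsOpen U) (hV : IsOpen V)
    (hK : ∀ l, ContDiffOn ℂ ω (K l) (U ×ˢ V)) (hθ : θ ∈ V)
    (hf : EqOn f (fun y => -∑ l, c l * K l (y, θ)) U) (hz : z ∈ U) (a : Fin n) :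
    pd a f z = -∑ l, c l * dirDeriv (zDir a) (K l) (z, θ) := by
  have hK' : ∀ y ∈ U, ∀ l, DifferentiableAt ℂ (K l) (y, θ) :=
    fun y hy l => (hK l).differentiableAt_of_isOpen (hU.prod hV) ⟨hy, hθ⟩
  have hH : ∀ y ∈ U, DifferentiableAt ℂ (fun x => -∑ l, c l * K l x) (y, θ) :=
    fun y hy => (DifferentiableAt.fun_sum fun l _ => (hK' y hy l).const_mul (c l)).neg
  rw [eqOn_pd_slice_fst hU hH hf a hz]
  dsimp only
  rw [dirDeriv_fun_neg, dirDeriv_fun_sum fun l _ => (hK' z hz l).const_mul (c l)]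
  simp_rw [dirDeriv_const_mul (hK' z hz _)]

end Joyce

/-- The linear Joyce connection, with Christoffel symbols
`Γ^m_{ij}(z) = -∑_l η_{lm} (∂³J/∂θ_i∂θ_j∂θ_l)(z,0)`, is flat and torsion-free. -/
theorem linear_joyce_connection_flat {n : ℕ} (η : Fin n → Fin n → ℂ)
    (hη : ∀ i j, η i j = -η j i)
    (U : Set (Fin n → ℂ)) (hU : IsOpen U)
    (V : Set (Fin n → ℂ)) (hV : IsOpen V) (h0V : (0 : Fin n → ℂ) ∈ V)
    (J : (Fin n → ℂ) → (Fin n → ℂ) → ℂ)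
    (hodd : ∀ z θ, J z (-θ) = -J z θ)
    (hsmooth : ContDiffOn ℂ ⊤ (fun p : (Fin n → ℂ) × (Fin n → ℂ) => J p.1 p.2) (U ×ˢ V))
    (hPDE : ∀ z ∈ U, ∀ θ ∈ V, ∀ i j,
      pd j (fun z' => pd i (J z') θ) z - pd i (fun z' => pd j (J z') θ) z =
        ∑ p, ∑ q, η p q * pd p (pd i (J z)) θ * pd q (pd j (J z)) θ)
    (Γc : Fin n → Fin n → Fin n → (Fin n → ℂ) → ℂ)
    (hΓ : ∀ m i j z, Γc m i j z = -∑ l, η l m * pd l (pd j (pd i (J z))) 0) :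
    ∀ z ∈ U,
      (∀ i j k m,
        pd i (Γc m j k) z - pd j (Γc m i k) z +
          ∑ q, (Γc m i q z * Γc q j k z - Γc m j q z * Γc q i k z) = 0) ∧
      ∀ i j m, Γc m i j z = Γc m j i z := by
  intro z hz
  have hJ : ContDiffOn ℂ ω (uncurry J) (U ×ˢ V) := hsmooth
  have hs : IsOpen (U ×ˢ V) := hU.prod hV
  have hx : (z, (0 : Fin n → ℂ)) ∈ U ×ˢ V := ⟨hz, h0V⟩
  have hΓW : ∀ y ∈ U, ∀ m a b, Γc m a b y =
      -∑ l, η l m * dirDeriv (θDir l) (dirDeriv (θDir b) (dirDeriv (θDir a) (uncurry J))) (y, 0) :=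
    fun y hy m a b => by simp only [hΓ, eqOn_pd_pd_pd_snd_uncurry hU hV hJ hy _ _ _ h0V]
  have hdΓ : ∀ a m b c, pd a (Γc m b c) z = -∑ l, η l m *
      dirDeriv (zDir a) (dirDeriv (θDir l) (dirDeriv (θDir c) (dirDeriv (θDir b) (uncurry J))))
        (z, 0) := fun a m b c =>
    pd_eq_neg_sum_mul_dirDeriv hU hV (fun l => ((hJ.dirDeriv hs _).dirDeriv hs _).dirDeriv hs _)
      h0V (fun y hy => hΓW y hy m b c) hz a
  have hD := dirDeriv_dirDeriv_of_joyce_pde η θDir zDir hs hJ hx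
    (joyce_pde_eqOn_dirDeriv η hU hV hJ hPDE)
    (dirDeriv_θDir_θDir_eq_zero_of_odd hU hV hJ hodd hz h0V)
  refine ⟨fun i j k m => ?_, fun i j m => ?_⟩
  · rw [hdΓ, hdΓ, neg_sub_neg, ← Finset.sum_sub_distrib]
    simp_rw [← mul_sub, hD, hΓW z hz, neg_mul_neg]
    exact joyce_curvature_identity η hη
      (fun a b c => dirDeriv (θDir c) (dirDeriv (θDir b) (dirDeriv (θDir a) (uncurry J))) (z, 0))
      (fun a b c => dirDeriv_comm ((hJ.dirDeriv hs _).contDiffAt (hs.mem_nhds hx)) _ _) i j k m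
  · rw [hΓW z hz, hΓW z hz]
    refine congrArg _ (Finset.sum_congr rfl fun l _ => congrArg _ ?_)
    exact Set.EqOn.dirDeriv_eq (fun y hy => dirDeriv_comm (hJ.contDiffAt (hs.mem_nhds hy)) _ _)
      hs hx _
end
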